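/- For all ordinals α and β, α·β ≤ ⨁_{i<β} α ≤ α·2·β, where ⨁_{i<β} α is the β-fold iterated Hessenberg sum of α and · is ordinal multiplication. -/

import Mathlib

namespace Ordinal

universe u

/-- Natural (Hessenberg) addition, as defined in Mathlib of December 2024. -/
noncomputable def nadd (a b : Ordinal.{u}) : Ordinal.{u} :=
  max (⨆ x : Set.Iio a, Order.succ (nadd x.1 b)) (⨆ x : Set.Iio b, Order.succ (nadd a x.1))
termination_by (a, b)
decreasing_by all_goals cases x; decreasing_tactic

end Ordinal

/-- The `β`-fold iterated Hessenberg (natural) sum of `α`: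
`⨁_{i<0} α = 0`, `⨁_{i<β+1} α = (⨁_{i<β} α) ⊕ α`, and
`⨁_{i<λ} α = sup_{β<λ} ⨁_{i<β} α` for `λ` a limit ordinal. -/
noncomputable def iterNadd (α β : Ordinal) : Ordinal :=
  Ordinal.limitRecOn β 0 (fun _ ih => Ordinal.nadd ih α)
    (fun b _ ih => ⨆ γ : Set.Iio b, ih γ.1 γ.2)

/-!
The lower bound is `a + b ≤ a ♯ b` iterated. For the upper bound it suffices that
`x ♯ y ≤ x + y * 2`. Natural addition splits at any `♯`-principal ordinal `D`: the parts of the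
summands above `D` and below `D` are added separately, so
`x ♯ y < D * succ (x / D ♯ y / D)`. The powers `ω ^ c` are `♯`-principal (by the same splitting
at `ω ^ d` when `c = d + 1`). Taking `D = ω ^ log ω y`, the quotient `y / D` is a natural number
`n`, and `D * (x / D + n + 1) ≤ x + y + y` since `D * (x / D) ≤ x`, `D * n ≤ y` and `D ≤ y`.
-/

open Ordinal Order Set

infixl:65 " ♯ " => Ordinal.nadd

namespace Ordinal

variable {a b c x y D : Ordinal}

theorem nadd_le_iff : b ♯ c ≤ a ↔ (∀ b' < b, b' ♯ c < a) ∧ ∀ c' < c, b ♯ c' < a := by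
  rw [nadd, max_le_iff, Ordinal.iSup_le_iff, Ordinal.iSup_le_iff]
  simp only [Order.succ_le_iff, Subtype.forall, Set.mem_Iio]

theorem nadd_lt_nadd_right (h : a < b) (c : Ordinal) : a ♯ c < b ♯ c :=
  lt_of_not_ge fun hle => lt_irrefl _ ((nadd_le_iff.1 hle).1 a h)

theorem nadd_lt_nadd_left (h : a < b) (c : Ordinal) : c ♯ a < c ♯ b :=
  lt_of_not_ge fun hle => lt_irrefl _ ((nadd_le_iff.1 hle).2 a h)

theorem nadd_le_nadd_right (h : a ≤ b) (c : Ordinal) : a ♯ c ≤ b ♯ c :=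
  StrictMono.monotone (fun _ _ h => nadd_lt_nadd_right h c) h

theorem nadd_le_nadd_left (h : a ≤ b) (c : Ordinal) : c ♯ a ≤ c ♯ b :=
  StrictMono.monotone (fun _ _ h => nadd_lt_nadd_left h c) h

theorem nadd_comm (a b : Ordinal) : a ♯ b = b ♯ a := by
  induction a using WellFoundedLT.induction generalizing b with | ind a IHa
  induction b using WellFoundedLT.induction with | ind b IHb
  refine le_antisymm (nadd_le_iff.2 ⟨fun a' ha' => ?_, fun b' hb' => ?_⟩)
    (nadd_le_iff.2 ⟨fun b' hb' => ?_, fun a' ha' => ?_⟩)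
  · rw [IHa a' ha']; exact nadd_lt_nadd_left ha' b
  · rw [IHb b' hb']; exact nadd_lt_nadd_right hb' a
  · rw [← IHb b' hb']; exact nadd_lt_nadd_left hb' a
  · rw [← IHa a' ha']; exact nadd_lt_nadd_right ha' b

@[simp]
theorem nadd_zero (a : Ordinal) : a ♯ 0 = a := by
  induction a using WellFoundedLT.induction with | ind a IH
  refine le_antisymm (nadd_le_iff.2 ⟨fun a' ha' => ?_, fun _ hc => (not_lt_zero hc).elim⟩)
    (le_of_forall_lt fun c hc => ?_)
  · rwa [IH a' ha']
  · rw [← IH c hc]; exact nadd_lt_nadd_right hc 0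

theorem succ_nadd (a b : Ordinal) : succ a ♯ b = succ (a ♯ b) := by
  induction b using WellFoundedLT.induction with | ind b IH
  refine le_antisymm (nadd_le_iff.2 ⟨fun a' ha' => ?_, fun b' hb' => ?_⟩)
    (succ_le_of_lt (nadd_lt_nadd_right (lt_succ a) b))
  · exact lt_succ_iff.2 (nadd_le_nadd_right (lt_succ_iff.1 ha') b)
  · rw [IH b' hb']; exact succ_lt_succ (nadd_lt_nadd_left hb' a)

theorem nadd_succ (a b : Ordinal) : a ♯ succ b = succ (a ♯ b) := by
  rw [nadd_comm, succ_nadd, nadd_comm]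

theorem nadd_natCast (a : Ordinal) (n : ℕ) : a ♯ n = a + n := by
  induction n with
  | zero => simp
  | succ n ih =>
    rw [Nat.cast_succ, ← add_assoc, ← ih, ← succ_eq_add_one, ← succ_eq_add_one, nadd_succ]

theorem add_le_nadd (a b : Ordinal) : a + b ≤ a ♯ b := by
  induction b using WellFoundedLT.induction with | ind b IH
  refine le_of_forall_lt fun c hc => ?_
  rcases lt_or_ge c a with h | h
  · exact h.trans_le (by simpa using nadd_le_nadd_left (zero_le (a := b)) a)
  · obtain ⟨d, rfl⟩ := exists_add_of_le h
    have hd : d < b := (add_lt_add_iff_left a).1 hc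
    exact (IH d hd).trans_lt (nadd_lt_nadd_left hd a)

theorem div_lt_div_or_of_lt {x' : Ordinal} (h : x' < x) :
    x' / D < x / D ∨ x' / D = x / D ∧ x' % D < x % D := by
  rcases eq_or_ne D 0 with rfl | hD
  · simpa using h
  rcases ((mul_le_iff_le_div hD).1 ((mul_div_le x' D).trans h.le)).lt_or_eq with hq | hq
  · exact .inl hq
  · refine .inr ⟨hq, ?_⟩
    rw [← div_add_mod x' D, ← div_add_mod x D, hq] at h
    exact (add_lt_add_iff_left _).1 h

theorem nadd_le_mul_div_nadd_add_mod_nadd (hD : IsPrincipal (· ♯ ·) D) (x y : Ordinal) :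
    x ♯ y ≤ D * (x / D ♯ y / D) + (x % D ♯ y % D) := by
  rcases eq_or_ne D 0 with rfl | hD0
  · simp
  have step : ∀ {x x' y : Ordinal}, x' < x →
      x' ♯ y ≤ D * (x' / D ♯ y / D) + (x' % D ♯ y % D) →
      x' ♯ y < D * (x / D ♯ y / D) + (x % D ♯ y % D) := by
    intro x x' y hx h
    rcases div_lt_div_or_of_lt (D := D) hx with hq | ⟨hq, hr⟩
    · calc x' ♯ y ≤ D * (x' / D ♯ y / D) + (x' % D ♯ y % D) := h
        _ < D * (x' / D ♯ y / D) + D := add_lt_add_right (hD (mod_lt x' hD0) (mod_lt y hD0)) _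
        _ = D * (succ (x' / D) ♯ y / D) := by rw [succ_nadd, mul_succ]
        _ ≤ D * (x / D ♯ y / D) := mul_le_mul_right (nadd_le_nadd_right (succ_le_of_lt hq) _) D
        _ ≤ D * (x / D ♯ y / D) + (x % D ♯ y % D) := le_self_add
    · rw [← hq]
      exact h.trans_lt (add_lt_add_right (nadd_lt_nadd_right hr _) _)
  induction x using WellFoundedLT.induction generalizing y with | ind x IHx
  induction y using WellFoundedLT.induction with | ind y IHy
  refine nadd_le_iff.2 ⟨fun x' hx' => step hx' (IHx x' hx' y), fun y' hy' => ?_⟩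
  have h := IHy y' hy'
  rw [nadd_comm x, nadd_comm (x / D), nadd_comm (x % D)] at h ⊢
  exact step hy' h

theorem nadd_lt_mul_succ_div_nadd_div (hD : IsPrincipal (· ♯ ·) D) (hD0 : D ≠ 0)
    (x y : Ordinal) : x ♯ y < D * succ (x / D ♯ y / D) := by
  rw [mul_succ]
  exact (nadd_le_mul_div_nadd_add_mod_nadd hD x y).trans_lt
    (add_lt_add_right (hD (mod_lt x hD0) (mod_lt y hD0)) _)

theorem isPrincipal_nadd_omega0_opow (c : Ordinal) : IsPrincipal (· ♯ ·) (ω ^ c) := by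
  induction c using limitRecOn with
  | zero => simp
  | add_one d IH =>
    intro a b ha hb
    have hD0 : ω ^ d ≠ 0 := opow_ne_zero d omega0_ne_zero
    rw [opow_add_one] at ha hb ⊢
    obtain ⟨n, hn⟩ := lt_omega0.1 ((lt_mul_iff_div_lt hD0).1 hb)
    refine (nadd_lt_mul_succ_div_nadd_div IH hD0 a b).trans_le (mul_le_mul_right ?_ _)
    rw [hn, nadd_natCast]
    exact succ_le_of_lt
      (isPrincipal_add_omega0 ((lt_mul_iff_div_lt hD0).1 ha) (natCast_lt_omega0 n))
  | limit c hc IH =>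
    rw [opow_limit omega0_ne_zero hc]
    exact IsPrincipal.iSup fun d => IH d.1 d.2

theorem nadd_le_add_mul_two (x y : Ordinal) : x ♯ y ≤ x + y * 2 := by
  rcases eq_or_ne y 0 with rfl | hy
  · simp
  set E := ω ^ log ω y
  have hE0 : E ≠ 0 := opow_ne_zero _ omega0_ne_zero
  have hyE : y < E * ω := by rw [← opow_succ]; exact lt_opow_succ_log_self one_lt_omega0 y
  obtain ⟨n, hn⟩ := lt_omega0.1 ((lt_mul_iff_div_lt hE0).1 hyE)
  calc x ♯ y ≤ E * succ (x / E ♯ y / E) :=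
        (nadd_lt_mul_succ_div_nadd_div (isPrincipal_nadd_omega0_opow _) hE0 x y).le
    _ = E * (x / E) + E * (y / E) + E := by rw [hn, nadd_natCast, mul_succ, mul_add]
    _ ≤ x + y + y := add_le_add (add_le_add (mul_div_le x E) (mul_div_le y E))
        (opow_log_le_self ω hy)
    _ = x + y * 2 := by rw [← one_add_one_eq_two, mul_add, mul_one, add_assoc]

end Ordinal

@[simp]
theorem iterNadd_zero (α : Ordinal) : iterNadd α 0 = 0 := by
  rw [iterNadd, limitRecOn_zero]

theorem iterNadd_add_one (α β : Ordinal) : iterNadd α (β + 1) = iterNadd α β ♯ α := by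
  rw [iterNadd, limitRecOn_add_one]
  rfl

theorem iterNadd_limit (α : Ordinal) {β : Ordinal} (hβ : IsSuccLimit β) :
    iterNadd α β = ⨆ γ : Iio β, iterNadd α γ.1 := by
  rw [iterNadd, limitRecOn_limit _ _ _ _ hβ]
  rfl

theorem mul_le_iterNadd (α β : Ordinal) : α * β ≤ iterNadd α β := by
  induction β using limitRecOn with
  | zero => simp
  | add_one β IH =>
    rw [iterNadd_add_one, mul_add_one]
    exact (add_le_add_left IH α).trans (add_le_nadd _ _)
  | limit β hβ IH =>
    rw [iterNadd_limit α hβ, mul_le_iff_of_isSuccLimit hβ]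
    exact fun γ hγ =>
      (IH γ hγ).trans (Ordinal.le_iSup (fun γ : Iio β => iterNadd α γ.1) ⟨γ, hγ⟩)

theorem iterNadd_le_mul_two_mul (α β : Ordinal) : iterNadd α β ≤ α * 2 * β := by
  induction β using limitRecOn with
  | zero => simp
  | add_one β IH =>
    rw [iterNadd_add_one, mul_add_one]
    exact (nadd_le_nadd_right IH α).trans (nadd_le_add_mul_two _ _)
  | limit β hβ IH =>
    rw [iterNadd_limit α hβ]
    exact Ordinal.iSup_le fun γ => (IH γ.1 γ.2).trans (mul_le_mul_right γ.2.le _)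

/-- For all ordinals `α` and `β`, `α·β ≤ ⨁_{i<β} α ≤ α·2·β`. -/
theorem mul_le_iterNadd_le_mul_two_mul (α β : Ordinal) :
    α * β ≤ iterNadd α β ∧ iterNadd α β ≤ α * 2 * β :=
  ⟨mul_le_iterNadd α β, iterNadd_le_mul_two_mul α β⟩
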